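/- In the setting of the isoperimetry proof (configuration in H, set G from the multi-scale construction, C_R the unique largest connected component of S ∩ B(0,R) and C_{2R} that of S ∩ B(0,2R)): let A ⊆ C_R, let M_A = {x ∈ G : C_x ∩ A ≠ ∅}, and let D_A = {x ∈ A : there exists y ∈ C_{2R}∖A with |x−y|_∞ ≤ 2L_s}. Then |∂_S A| ≥ max{ (1/(d·2^d))·|∂_G M_A| , |D_A|/(11·L_s)^d }; moreover there exists ρ > 0 such that if r_0/l_0 < ρ then |A| ≤ 6^d·L_0^d·|M_A| + |D_A|. -/

import Mathlib

open MeasureTheory Filter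
open scoped ENNReal

namespace Perco

/-- A point of the lattice `ℤ^d`. -/
abbrev Pt (d : ℕ) := Fin d → ℤ

/-- A percolation configuration on `ℤ^d`. -/
abbrev Config (d : ℕ) := Pt d → Bool

variable {d : ℕ}

/-- The `ℓ¹`-distance on `ℤ^d`. -/
def dist1 (x y : Pt d) : ℕ := ∑ i, (x i - y i).natAbs

/-- The `ℓ^∞`-distance on `ℤ^d`. -/
def distInf (x y : Pt d) : ℕ := Finset.univ.sup fun i => (x i - y i).natAbs

/-- The closed `ℓ^∞`-ball of radius `R` around `x`. -/
def ballZ (x : Pt d) (R : ℕ) : Set (Pt d) := {y | distInf x y ≤ R}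

/-- Nearest-neighbour adjacency in `ℤ^d`. -/
def adj (x y : Pt d) : Prop := dist1 x y = 1

/-- The occupied set of a configuration. -/
def SS (ω : Config d) : Set (Pt d) := {x | ω x = true}

/-- One step of a nearest-neighbour path staying inside `T`. -/
def stepRel (T : Set (Pt d)) (x y : Pt d) : Prop := adj x y ∧ x ∈ T ∧ y ∈ T

/-- `x` and `y` are connected by a nearest-neighbour path inside `T`. -/
def connIn (T : Set (Pt d)) (x y : Pt d) : Prop :=
  x ∈ T ∧ y ∈ T ∧ Relation.ReflTransGen (stepRel T) x y

/-- The connected component (cluster) of `x` in `T`. -/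
def cluster (T : Set (Pt d)) (x : Pt d) : Set (Pt d) := {y | connIn T x y}

/-- `S_r`: vertices of `S(ω)` in connected components of `ℓ¹`-diameter at least `r`. -/
def Sr (ω : Config d) (r : ℝ) : Set (Pt d) :=
  {x | x ∈ SS ω ∧ ∃ y ∈ cluster (SS ω) x, ∃ z ∈ cluster (SS ω) x, r ≤ (dist1 y z : ℝ)}

/-- `S_∞`: vertices of `S(ω)` in infinite connected components. -/
def Sinf (ω : Config d) : Set (Pt d) := {x | x ∈ SS ω ∧ (cluster (SS ω) x).Infinite}

/-- The shift of a configuration by `x`. -/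
def shift (x : Pt d) (ω : Config d) : Config d := fun y => ω (x + y)

/-- An increasing event. -/
def IncreasingEvent (G : Set (Config d)) : Prop :=
  ∀ ω ω' : Config d, (∀ x, ω x = true → ω' x = true) → ω ∈ G → ω' ∈ G

/-- A decreasing event. -/
def DecreasingEvent (G : Set (Config d)) : Prop :=
  ∀ ω ω' : Config d, (∀ x, ω' x = true → ω x = true) → ω ∈ G → ω' ∈ G

/-- The event `G` depends only on the coordinates in `B`. -/
def DependsOn (G : Set (Config d)) (B : Set (Pt d)) : Prop :=
  ∀ ω ω' : Config d, (∀ x ∈ B, ω x = ω' x) → (ω ∈ G ↔ ω' ∈ G)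

/-- The edge boundary of `A` in `Sset`: (directed representatives of) edges of `ℤ^d`
with one endpoint in `A` and the other in `Sset \ A`. -/
def edgeBd (Sset A : Set (Pt d)) : Set (Pt d × Pt d) :=
  {p | adj p.1 p.2 ∧ p.1 ∈ A ∧ p.2 ∈ Sset \ A}

/-- The density `η(u) = P[0 ∈ S_∞]` of the infinite cluster. -/
noncomputable def eta (d : ℕ) (P : Measure (Config d)) : ℝ :=
  (P {ω | (0 : Pt d) ∈ Sinf ω}).toReal

/-- The first local-uniqueness event of axiom S1. -/
def locUniq1 (d : ℕ) (R : ℕ) : Set (Config d) :=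
  {ω | (Sr ω R ∩ ballZ (0 : Pt d) R).Nonempty}

/-- The second local-uniqueness event of axiom S1. -/
def locUniq2 (d : ℕ) (R : ℕ) : Set (Config d) :=
  {ω | ∀ x ∈ Sr ω ((R : ℝ)/10) ∩ ballZ (0 : Pt d) R,
       ∀ y ∈ Sr ω ((R : ℝ)/10) ∩ ballZ (0 : Pt d) R,
       connIn (SS ω ∩ ballZ (0 : Pt d) (2*R)) x y}

/-- The axioms **P1**–**P3** and **S1**–**S2** of Drewitz–Ráth–Sapozhnikov for a
one-parameter family of probability measures on `{0,1}^{ℤ^d}`. -/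
structure Axioms (d : ℕ) (a b : ℝ) (P : ℝ → Measure (Config d)) where
  /-- decoupling exponent -/
  εP : ℝ
  /-- sprinkling exponent -/
  χP : ℝ
  RP : ℕ
  LP : ℕ
  fP : ℕ → ℝ
  fS : ℝ → ℕ → ℝ
  ΔS : ℝ → ℝ
  RS : ℝ → ℕ
  prob : ∀ u ∈ Set.Ioo a b, IsProbabilityMeasure (P u)
  /-- P1: every lattice shift is measure preserving and ergodic. -/
  ergodic : ∀ u ∈ Set.Ioo a b, ∀ x : Pt d, x ≠ 0 → Ergodic (shift x) (P u)
  /-- P2: monotonicity. -/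
  mono : ∀ u ∈ Set.Ioo a b, ∀ u' ∈ Set.Ioo a b, u ≤ u' →
    ∀ G : Set (Config d), MeasurableSet G → IncreasingEvent G → P u G ≤ P u' G
  εP_pos : 0 < εP
  χP_pos : 0 < χP
  fP_lb : ∀ L : ℕ, LP ≤ L → Real.exp ((Real.log L) ^ εP) ≤ fP L
  /-- P3, decoupling for decreasing events. -/
  decoupleDec : ∀ (R L : ℕ), RP ≤ R → 1 ≤ L → ∀ x₁ x₂ : Pt d, R * L ≤ distInf x₁ x₂ →
    ∀ u uh : ℝ, uh ∈ Set.Ioo a b → u ∈ Set.Ioo a b → uh < u →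
    (1 + (R : ℝ) ^ (-χP)) * uh ≤ u →
    ∀ A₁ A₂ : Set (Config d), MeasurableSet A₁ → MeasurableSet A₂ →
      DecreasingEvent A₁ → DecreasingEvent A₂ →
      DependsOn A₁ (ballZ x₁ (10*L)) → DependsOn A₂ (ballZ x₂ (10*L)) →
      (P u (A₁ ∩ A₂)).toReal ≤ (P uh A₁).toReal * (P uh A₂).toReal + Real.exp (-(fP L))
  /-- P3, decoupling for increasing events. -/
  decoupleInc : ∀ (R L : ℕ), RP ≤ R → 1 ≤ L → ∀ x₁ x₂ : Pt d, R * L ≤ distInf x₁ x₂ →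
    ∀ u uh : ℝ, uh ∈ Set.Ioo a b → u ∈ Set.Ioo a b → uh < u →
    (1 + (R : ℝ) ^ (-χP)) * uh ≤ u →
    ∀ B₁ B₂ : Set (Config d), MeasurableSet B₁ → MeasurableSet B₂ →
      IncreasingEvent B₁ → IncreasingEvent B₂ →
      DependsOn B₁ (ballZ x₁ (10*L)) → DependsOn B₂ (ballZ x₂ (10*L)) →
      (P uh (B₁ ∩ B₂)).toReal ≤ (P u B₁).toReal * (P u B₂).toReal + Real.exp (-(fP L))
  ΔS_pos : ∀ u ∈ Set.Ioo a b, 0 < ΔS u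
  fS_lb : ∀ u ∈ Set.Ioo a b, ∀ R : ℕ, RS u ≤ R → (Real.log R) ^ (1 + ΔS u) ≤ fS u R
  /-- S1, first part. -/
  S1a : ∀ u ∈ Set.Ioo a b, ∀ R : ℕ, 1 ≤ R →
    1 - Real.exp (-(fS u R)) ≤ (P u (locUniq1 d R)).toReal
  /-- S1, second part. -/
  S1b : ∀ u ∈ Set.Ioo a b, ∀ R : ℕ, 1 ≤ R →
    1 - Real.exp (-(fS u R)) ≤ (P u (locUniq2 d R)).toReal
  /-- S2: positivity of the density of the infinite cluster. -/
  S2pos : ∀ u ∈ Set.Ioo a b, 0 < eta d (P u)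
  /-- S2: continuity of the density of the infinite cluster. -/
  S2cont : ContinuousOn (fun u => eta d (P u)) (Set.Ioo a b)


/-! ### Renormalization scales and good/bad boxes -/

/-- The scales `l_k = l_0·4^{k^{θ_sc}}`. -/
def lSc (l0 θsc k : ℕ) : ℕ := l0 * 4 ^ (k ^ θsc)

/-- The scales `r_k = r_0·2^{k^{θ_sc}}`. -/
def rSc (r0 θsc k : ℕ) : ℕ := r0 * 2 ^ (k ^ θsc)

/-- The scales `L_0 = L_0`, `L_{k+1} = l_k·L_k`. -/
def LSc (l0 L0 θsc : ℕ) : ℕ → ℕ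
  | 0 => L0
  | k+1 => lSc l0 θsc k * LSc l0 L0 θsc k

/-- The renormalized lattice `G = L·ℤ^d`. -/
def lattice (d L : ℕ) : Set (Pt d) := {x | ∀ i, (L : ℤ) ∣ x i}

/-- The box `x + [0,n)^d`. -/
def box (x : Pt d) (n : ℕ) : Set (Pt d) := {y | ∀ i, x i ≤ y i ∧ y i < x i + n}

/-- The box `x + [lo,hi)^d`. -/
def boxI (x : Pt d) (lo hi : ℤ) : Set (Pt d) := {y | ∀ i, x i + lo ≤ y i ∧ y i < x i + hi}

/-- The corner `x + e·L_0` of the sub-box indexed by `e ∈ {0,1}^d`. -/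
def subCorner (x : Pt d) (L0 : ℕ) (e : Fin d → Bool) : Pt d :=
  fun i => x i + (if e i then (L0 : ℤ) else 0)

/-- `C` is a connected component of `S_{L0} ∩ B` of cardinality at least `(3/4)·η·L_0^d`. -/
def bigCompIn (ω : Config d) (η : ℝ) (L0 : ℕ) (B : Set (Pt d)) (C : Set (Pt d)) : Prop :=
  (∃ w ∈ Sr ω (L0 : ℝ) ∩ B, C = cluster (Sr ω (L0 : ℝ) ∩ B) w) ∧
  (3/4 : ℝ) * η * (L0 : ℝ) ^ d ≤ C.ncard

/-- The event `A^u_x`: each of the `2^d` sub-boxes of side `L_0` of `x + [0,2L_0)^d` contains a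
connected component of `S_{L_0}` with at least `(3/4)·η·L_0^d` vertices, and all these components
are connected in `S ∩ (x+[0,2L_0)^d)`. -/
def eventA (d : ℕ) (η : ℝ) (L0 : ℕ) (x : Pt d) : Set (Config d) :=
  {ω | (∀ e : Fin d → Bool, ∃ C, bigCompIn ω η L0 (box (subCorner x L0 e) L0) C) ∧
       (∀ e e' : Fin d → Bool, ∀ C C' : Set (Pt d), ∀ y z : Pt d,
          bigCompIn ω η L0 (box (subCorner x L0 e) L0) C →
          bigCompIn ω η L0 (box (subCorner x L0 e') L0) C' →
          y ∈ C → z ∈ C' → connIn (SS ω ∩ box x (2*L0)) y z)}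

/-- The event `B^u_x`: each of the `2^d` sub-boxes of side `L_0` of `x + [0,2L_0)^d` contains at
most `(5/4)·η·L_0^d` vertices of `S_{L_0}`. -/
def eventB (d : ℕ) (η : ℝ) (L0 : ℕ) (x : Pt d) : Set (Config d) :=
  {ω | ∀ e : Fin d → Bool,
    ((Sr ω (L0 : ℝ) ∩ box (subCorner x L0 e) L0).ncard : ℝ) ≤ (5/4 : ℝ) * η * (L0 : ℝ) ^ d}

/-- The recursive cascading of a family of "bad" seed events along the renormalization scheme. -/
def cascade (d : ℕ) (r0 l0 L0 θsc : ℕ) (seed : Pt d → Set (Config d)) :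
    ℕ → Pt d → Set (Config d)
  | 0, x => seed x
  | k+1, x => {ω | ∃ x₁ x₂ : Pt d,
      x₁ ∈ lattice d (LSc l0 L0 θsc k) ∩ box x (LSc l0 L0 θsc (k+1)) ∧
      x₂ ∈ lattice d (LSc l0 L0 θsc k) ∩ box x (LSc l0 L0 θsc (k+1)) ∧
      rSc r0 θsc k * LSc l0 L0 θsc k ≤ distInf x₁ x₂ ∧
      ω ∈ cascade d r0 l0 L0 θsc seed k x₁ ∧ ω ∈ cascade d r0 l0 L0 θsc seed k x₂}

/-- The event `Ā^u_{x,k}`. -/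
def Abar (d : ℕ) (η : ℝ) (r0 l0 L0 θsc : ℕ) : ℕ → Pt d → Set (Config d) :=
  cascade d r0 l0 L0 θsc (fun x => (eventA d η L0 x)ᶜ)

/-- The event `B̄^u_{x,k}`. -/
def Bbar (d : ℕ) (η : ℝ) (r0 l0 L0 θsc : ℕ) : ℕ → Pt d → Set (Config d) :=
  cascade d r0 l0 L0 θsc (fun x => (eventB d η L0 x)ᶜ)

/-- The event that `x ∈ G_k` is `k`-bad. -/
def kBad (d : ℕ) (η : ℝ) (r0 l0 L0 θsc k : ℕ) (x : Pt d) : Set (Config d) :=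
  Abar d η r0 l0 L0 θsc k x ∪ Bbar d η r0 l0 L0 θsc k x

/-- `s` is the largest integer with `L_s^{3d²} ≤ R^{θ_iso}`. -/
def isScaleS (d l0 L0 θsc : ℕ) (θiso : ℝ) (R s : ℕ) : Prop :=
  ((LSc l0 L0 θsc s : ℝ)) ^ (3*d^2) ≤ (R : ℝ) ^ θiso ∧
  ∀ s' : ℕ, ((LSc l0 L0 θsc s' : ℝ)) ^ (3*d^2) ≤ (R : ℝ) ^ θiso → s' ≤ s

/-- The event `H`: (a) every vertex of `G_r ∩ B(0,3R)` is `r`-good, and (b) any two points of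
`S_{L_s}` lying in a common box `z+[−2L_s,2L_s)^d`, `z ∈ B(0,2R)`, are connected inside
`S ∩ (z+[−4L_s,4L_s)^d)`. -/
def eventH (d : ℕ) (η : ℝ) (r0 l0 L0 θsc s r R : ℕ) : Set (Config d) :=
  {ω | (∀ z ∈ lattice d (LSc l0 L0 θsc r) ∩ ballZ (0 : Pt d) (3*R),
          ω ∉ kBad d η r0 l0 L0 θsc r z) ∧
       (∀ z ∈ ballZ (0 : Pt d) (2*R),
          ∀ x ∈ Sr ω ((LSc l0 L0 θsc s : ℕ) : ℝ) ∩
                boxI z (-(2*(LSc l0 L0 θsc s) : ℤ)) (2*(LSc l0 L0 θsc s)),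
          ∀ y ∈ Sr ω ((LSc l0 L0 θsc s : ℕ) : ℝ) ∩
                boxI z (-(2*(LSc l0 L0 θsc s) : ℤ)) (2*(LSc l0 L0 θsc s)),
          connIn (SS ω ∩ boxI z (-(4*(LSc l0 L0 θsc s) : ℤ)) (4*(LSc l0 L0 θsc s))) x y)}

/-- The boundary of `A` within `g`, in the `L`-renormalized lattice: pairs of vertices of `g` at
`ℓ¹`-distance `L` with one vertex in `A` and the other in `g ∖ A`. -/
def bdWithin (L : ℕ) (g A : Set (Pt d)) : Set (Pt d × Pt d) :=
  {p | dist1 p.1 p.2 = L ∧ p.1 ∈ A ∧ p.2 ∈ g \ A}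

/-- One step of an `L`-renormalized nearest-neighbour path inside `T`. -/
def stepRelL (L : ℕ) (T : Set (Pt d)) (x y : Pt d) : Prop :=
  dist1 x y = L ∧ x ∈ T ∧ y ∈ T

/-- `x` and `y` are connected by an `L`-renormalized nearest-neighbour path inside `T`. -/
def connInL (L : ℕ) (T : Set (Pt d)) (x y : Pt d) : Prop :=
  x ∈ T ∧ y ∈ T ∧ Relation.ReflTransGen (stepRelL L T) x y

/-- The set `T` is connected as a subgraph of the `L`-renormalized lattice. -/
def IsConnL (L : ℕ) (T : Set (Pt d)) : Prop := ∀ x ∈ T, ∀ y ∈ T, connInL L T x y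

/-- The infinite product `f_j(r_0/l_0) = ∏_{i=0}^∞ (1 − 3(r_i/l_i)^j)`. -/
noncomputable def fjProd (r0 l0 θsc j : ℕ) : ℝ :=
  ∏' i : ℕ, (1 - 3 * ((rSc r0 θsc i : ℝ) / (lSc l0 θsc i)) ^ j)

/-- The affine sublattice `x₀ + ∑_{i=1}^j ℤ·e_i`. -/
def sliceSpan {j : ℕ} (x0 : Pt d) (e : Fin j → Pt d) : Set (Pt d) :=
  {y | ∃ c : Fin j → ℤ, y = x0 + ∑ i, c i • e i}

/-- The vectors `e_1,…,e_j` are pairwise orthogonal with `|e_i|₁ = 1`. -/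
def orthoUnit {j : ℕ} (e : Fin j → Pt d) : Prop :=
  (∀ i, dist1 (0 : Pt d) (e i) = 1) ∧
  Pairwise fun i i' => (∑ t, (e i t) * (e i' t)) = 0

/-- `C` is a connected component of maximal cardinality of `T`. -/
def isLargestComp (T C : Set (Pt d)) : Prop :=
  (∃ x ∈ T, C = cluster T x) ∧ ∀ y ∈ T, (cluster T y).ncard ≤ C.ncard


/-!
Each pair `(x, y)` of `∂_G M_A` consists of two corners of a box `z + [0, 2L_0)^d` with `z ∈ G`,
on which the event `A` connects `C_x`, which meets `A`, to `C_y`, which does not; the connecting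
path crosses `∂_S A` inside that box, and an edge of `∂_S A` is reached this way from at most
`d·2^d` pairs. A point `x ∈ D_A` and its partner `y ∈ C_{2R} ∖ A` both lie in `S_{L_s}` and in a
common box of side `4L_s`, so by `H` they are joined within distance `4L_s` of `x`, and each edge
of `∂_S A` is reached from at most `(11L_s)^d` such points.

For the volume bound, let `x ∈ A ∖ D_A`. Every `C_z` with `z ∈ G` in the `L_s`-box containing `x`
lies within distance `2L_s` of `x`, so it meets `A` and `z ∈ M_A`. These boxes are disjoint and
each holds at least `f_d(r_0/l_0)·(L_s/L_0)^d ≥ (5/8)(L_s/L_0)^d` points of `G`, because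
`f_d(r_0/l_0) ≥ 5/8` as soon as `4r_0 < l_0`.
-/

lemma dist1_comm (x y : Pt d) : dist1 x y = dist1 y x :=
  Finset.sum_congr rfl fun i _ => by omega

lemma distInf_le_iff {x y : Pt d} {n : ℕ} : distInf x y ≤ n ↔ ∀ i, (x i - y i).natAbs ≤ n := by
  simp [distInf, Finset.sup_le_iff]

lemma natAbs_sub_le_dist1 (x y : Pt d) (i : Fin d) : (x i - y i).natAbs ≤ dist1 x y :=
  Finset.single_le_sum (f := fun i => (x i - y i).natAbs) (fun _ _ => Nat.zero_le _)
    (Finset.mem_univ i)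

lemma distInf_le_dist1 (x y : Pt d) : distInf x y ≤ dist1 x y :=
  distInf_le_iff.mpr (natAbs_sub_le_dist1 x y)

lemma one_le_dist1 {x y : Pt d} (h : x ≠ y) : 1 ≤ dist1 x y := by
  obtain ⟨i, hi⟩ := Function.ne_iff.mp h
  have := natAbs_sub_le_dist1 x y i
  omega

lemma ncard_le_pow_of_subset_piFinset {s : Set (Pt d)} {t : Fin d → Finset ℤ} {n : ℕ}
    (hs : s ⊆ Fintype.piFinset t) (ht : ∀ i, (t i).card = n) : s.ncard ≤ n ^ d := by
  refine (Set.ncard_le_ncard hs (Finset.finite_toSet _)).trans ?_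
  rw [Set.ncard_coe_finset, Fintype.card_piFinset, Finset.prod_congr rfl fun i _ => ht i]
  simp

lemma ballZ_subset_piFinset (x : Pt d) (R : ℕ) :
    ballZ x R ⊆ Fintype.piFinset fun i => Finset.Icc (x i - R) (x i + R) := by
  intro y hy
  simp only [Finset.mem_coe, Fintype.mem_piFinset, Finset.mem_Icc]
  intro i
  have := distInf_le_iff.mp hy i
  omega

lemma ballZ_finite (x : Pt d) (R : ℕ) : (ballZ x R).Finite :=
  (Finset.finite_toSet _).subset (ballZ_subset_piFinset x R)

lemma ncard_ballZ_le (x : Pt d) (R : ℕ) : (ballZ x R).ncard ≤ (2 * R + 1) ^ d :=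
  ncard_le_pow_of_subset_piFinset (ballZ_subset_piFinset x R) fun i => by
    rw [Int.card_Icc]; omega

lemma box_subset_piFinset (x : Pt d) (n : ℕ) :
    box x n ⊆ Fintype.piFinset fun i => Finset.Ico (x i) (x i + n) := by
  intro y hy
  simp only [Finset.mem_coe, Fintype.mem_piFinset, Finset.mem_Ico]
  exact hy

lemma box_finite (x : Pt d) (n : ℕ) : (box x n).Finite :=
  (Finset.finite_toSet _).subset (box_subset_piFinset x n)

lemma ncard_box_le (x : Pt d) (n : ℕ) : (box x n).ncard ≤ n ^ d :=
  ncard_le_pow_of_subset_piFinset (box_subset_piFinset x n) fun i => by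
    rw [Int.card_Ico]; omega

section Connectivity

variable {S T A C : Set (Pt d)} {x y z : Pt d}

lemma stepRel_symm (h : stepRel T x y) : stepRel T y x :=
  ⟨(dist1_comm y x).trans h.1, h.2.2, h.2.1⟩

lemma connIn.symm (h : connIn T x y) : connIn T y x :=
  ⟨h.2.1, h.1, Relation.ReflTransGen.mono (fun _ _ => stepRel_symm) _ _
    (Relation.ReflTransGen.swap _ _ h.2.2)⟩

lemma connIn.trans (h : connIn T x y) (h' : connIn T y z) : connIn T x z :=
  ⟨h.1, h'.2.1, h.2.2.trans h'.2.2⟩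

lemma connIn.mono (h : connIn T x y) (hT : T ⊆ S) : connIn S x y :=
  ⟨hT h.1, hT h.2.1,
    Relation.ReflTransGen.mono (fun _ _ hs => ⟨hs.1, hT hs.2.1, hT hs.2.2⟩) _ _ h.2.2⟩

lemma isLargestComp.subset (hC : isLargestComp T C) : C ⊆ T := by
  obtain ⟨⟨w, -, rfl⟩, -⟩ := hC
  exact fun _ hy => hy.2.1

lemma isLargestComp.connIn_of_mem (hC : isLargestComp T C) (hx : x ∈ C) (hy : y ∈ C) :
    connIn T x y := by
  obtain ⟨⟨w, -, rfl⟩, -⟩ := hC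
  exact hx.symm.trans hy

lemma mem_Sr_of_mem_isLargestComp {ω : Config d} (hC : isLargestComp T C) (hT : T ⊆ SS ω)
    {r : ℝ} {u w : Pt d} (hu : u ∈ C) (hw : w ∈ C) (huw : r ≤ dist1 u w) (hx : x ∈ C) :
    x ∈ Sr ω r :=
  ⟨hT (hC.subset hx), u, (hC.connIn_of_mem hx hu).mono hT, w,
    (hC.connIn_of_mem hx hw).mono hT, huw⟩

lemma exists_mem_edgeBd_of_connIn (hT : T ⊆ S) (h : connIn T x y) (hx : x ∈ A) (hy : y ∉ A) :
    ∃ e ∈ edgeBd S A, e.1 ∈ T := by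
  obtain ⟨-, -, h⟩ := h
  induction h using Relation.ReflTransGen.head_induction_on with
  | refl => exact absurd hx hy
  | @head a c hstep _ ih =>
    by_cases hc : c ∈ A
    · exact ih hc
    · exact ⟨(a, c), ⟨hstep.1, hx, hT hstep.2.2, hc⟩, hstep.2.1⟩

lemma edgeBd_finite (S : Set (Pt d)) (hA : A.Finite) : (edgeBd S A).Finite := by
  refine (hA.biUnion fun a _ => (Set.finite_singleton a).prod (ballZ_finite a 1)).subset ?_
  rintro ⟨a, b⟩ ⟨hab, ha, -⟩
  exact Set.mem_biUnion ha ⟨rfl, (distInf_le_dist1 a b).trans hab.le⟩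

end Connectivity

lemma ncard_le_mul_ncard_of_mapsTo {α β : Type*} {s : Set α} {t : Set β} {f : α → β}
    (hs : s.Finite) (ht : t.Finite) (hf : Set.MapsTo f s t) {n : ℕ}
    (hn : ∀ b ∈ t, {a ∈ s | f a = b}.ncard ≤ n) : s.ncard ≤ n * t.ncard := by
  classical
  rw [Set.ncard_eq_toFinset_card _ hs, Set.ncard_eq_toFinset_card _ ht]
  refine Finset.card_le_mul_card_image_of_maps_to (f := f) (fun a ha => ?_) n fun b hb => ?_
  · simpa using hf (by simpa using ha)
  · have := hn b (by simpa using hb)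
    rw [← Set.ncard_coe_finset, Finset.coe_filter]
    simpa only [Set.Finite.mem_toFinset] using this

lemma ncard_le_of_forall_exists_near {D : Set (Pt d)} {E : Set (Pt d × Pt d)} (hD : D.Finite)
    (hE : E.Finite) {r : ℕ} (h : ∀ x ∈ D, ∃ e ∈ E, distInf e.1 x ≤ r) :
    D.ncard ≤ (2 * r + 1) ^ d * E.ncard := by
  choose! f hfE hf using h
  refine ncard_le_mul_ncard_of_mapsTo hD hE (fun x hx => hfE x hx) fun e _ => ?_
  refine (Set.ncard_le_ncard ?_ (ballZ_finite e.1 r)).trans (ncard_ballZ_le e.1 r)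
  rintro x ⟨hx, rfl⟩
  exact hf x hx

lemma ncard_mul_le_of_pairwiseDisjoint {ι α : Type*} {X : Set ι} (hX : X.Finite)
    {B : ι → Set α} (hB : ∀ i ∈ X, (B i).Finite) (hdisj : X.PairwiseDisjoint B) {M : Set α}
    (hM : M.Finite) (hsub : ∀ i ∈ X, B i ⊆ M) {c : ℝ} (hc : ∀ i ∈ X, c ≤ (B i).ncard) :
    X.ncard * c ≤ M.ncard := by
  have hU : (⋃ i ∈ X, B i).ncard ≤ M.ncard := Set.ncard_le_ncard (Set.iUnion₂_subset hsub) hM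
  rw [hX.ncard_biUnion hB hdisj, finsum_mem_eq_finite_toFinset_sum _ hX] at hU
  rw [Set.ncard_eq_toFinset_card _ hX]
  calc (hX.toFinset.card : ℝ) * c = ∑ _i ∈ hX.toFinset, c := by simp [mul_comm]
    _ ≤ ∑ i ∈ hX.toFinset, ((B i).ncard : ℝ) :=
        Finset.sum_le_sum fun i hi => hc i (by simpa using hi)
    _ ≤ M.ncard := by exact_mod_cast hU

lemma nonempty_of_le_ncard {α : Type*} {s : Set α} {c : ℝ} (hc : 0 < c) (h : c ≤ s.ncard) :
    s.Nonempty :=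
  Set.nonempty_of_ncard_ne_zero fun h0 => by rw [h0, Nat.cast_zero] at h; linarith

lemma le_LSc {l0 : ℕ} (hl : 0 < l0) (L0 θ s : ℕ) : L0 ≤ LSc l0 L0 θ s := by
  induction s with
  | zero => exact le_rfl
  | succ k ih => exact ih.trans (Nat.le_mul_of_pos_left _ (Nat.mul_pos hl (by positivity)))

lemma eight_mul_le_pow_four {n : ℕ} (hn : 2 ≤ n) : 8 * n ≤ n ^ 4 :=
  calc 8 * n = 2 ^ 3 * n := rfl
    _ ≤ n ^ 3 * n := Nat.mul_le_mul_right _ (Nat.pow_le_pow_left hn 3)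
    _ = n ^ 4 := by ring

lemma pow_four_le_of_isScaleS {l0 L0 θsc R s : ℕ} {θiso : ℝ} (hd : 2 ≤ d) (hL0 : 0 < L0)
    (hLs : 0 < LSc l0 L0 θsc s) (hθ : θiso ∈ Set.Ioo (0 : ℝ) 1)
    (hRL : (L0 : ℝ) ^ ((3 * (d : ℝ) ^ 2) / θiso) ≤ R) (hs : isScaleS d l0 L0 θsc θiso R s) :
    LSc l0 L0 θsc s ^ 4 ≤ R := by
  have hR : (1 : ℝ) ≤ R :=
    (Real.one_le_rpow (by exact_mod_cast hL0) (div_nonneg (by positivity) hθ.1.le)).trans hRL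
  have hLs1 : (1 : ℝ) ≤ LSc l0 L0 θsc s := by exact_mod_cast hLs
  have : ((LSc l0 L0 θsc s : ℕ) : ℝ) ^ 4 ≤ R :=
    calc ((LSc l0 L0 θsc s : ℕ) : ℝ) ^ 4 ≤ (LSc l0 L0 θsc s : ℝ) ^ (3 * d ^ 2) :=
          pow_le_pow_right₀ hLs1 (by nlinarith)
      _ ≤ (R : ℝ) ^ θiso := hs.1
      _ ≤ (R : ℝ) ^ (1 : ℝ) := Real.rpow_le_rpow_of_exponent_le hR hθ.2.le
      _ = R := Real.rpow_one _
  exact_mod_cast this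

lemma rSc_div_lSc_le {r0 l0 θ : ℕ} (hrl : 4 * r0 < l0) (hθ : 1 ≤ θ) (i : ℕ) :
    (rSc r0 θ i : ℝ) / lSc l0 θ i ≤ 1 / 4 * (1 / 2) ^ i := by
  have hl : (0 : ℝ) < l0 := by exact_mod_cast (show 0 < l0 by omega)
  have hratio : (rSc r0 θ i : ℝ) / lSc l0 θ i = r0 / l0 * (1 / 2) ^ (i ^ θ) := by
    simp only [rSc, lSc]
    push_cast
    rw [show (4 : ℝ) = 2 * 2 by norm_num, mul_pow, one_div_pow]
    field_simp
  have hr : (r0 : ℝ) / l0 ≤ 1 / 4 := by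
    rw [div_le_iff₀ hl]
    have : (4 * r0 : ℝ) ≤ l0 := by exact_mod_cast hrl.le
    linarith
  rw [hratio]
  exact mul_le_mul hr (pow_le_pow_of_le_one (by norm_num) (by norm_num)
    (Nat.le_self_pow (by omega) i)) (by positivity) (by norm_num)

lemma one_sub_sum_le_prod_one_sub {ι : Type*} (s : Finset ι) {a : ι → ℝ} (h0 : ∀ i, 0 ≤ a i)
    (h1 : ∀ i, a i ≤ 1) : 1 - ∑ i ∈ s, a i ≤ ∏ i ∈ s, (1 - a i) := by
  classical
  induction s using Finset.induction_on with
  | empty => simp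
  | insert j t hj ih =>
    rw [Finset.sum_insert hj, Finset.prod_insert hj]
    have : 0 ≤ ∑ i ∈ t, a i := Finset.sum_nonneg fun i _ => h0 i
    nlinarith [h0 j, h1 j]

lemma one_sub_tsum_le_tprod_one_sub {a : ℕ → ℝ} (h0 : ∀ i, 0 ≤ a i) (h1 : ∀ i, a i ≤ 1)
    (ha : Summable a) : 1 - ∑' i, a i ≤ ∏' i, (1 - a i) := by
  by_cases hm : Multipliable fun i => 1 - a i
  · exact le_hasProd_of_le_prod hm.hasProd fun s =>
      (sub_le_sub_left (ha.sum_le_tsum s fun i _ => h0 i) 1).trans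
        (one_sub_sum_le_prod_one_sub s h0 h1)
  · rw [tprod_eq_one_of_not_multipliable hm]
    linarith [(tsum_nonneg h0 : 0 ≤ ∑' i, a i)]

lemma five_eighths_le_fjProd {r0 l0 θ j : ℕ} (hrl : 4 * r0 < l0) (hθ : 1 ≤ θ) (hj : 2 ≤ j) :
    (5 / 8 : ℝ) ≤ fjProd r0 l0 θ j := by
  set a : ℕ → ℝ := fun i => 3 * ((rSc r0 θ i : ℝ) / lSc l0 θ i) ^ j
  have ha0 : ∀ i, 0 ≤ a i := fun i => by positivity
  have hle : ∀ i, a i ≤ 3 / 16 * (1 / 2) ^ i := fun i => by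
    have hq : (1 / 2 : ℝ) ^ i ≤ 1 := pow_le_one₀ (by norm_num) (by norm_num)
    calc a i ≤ 3 * (1 / 4 * (1 / 2) ^ i) ^ j :=
          mul_le_mul_of_nonneg_left
            (pow_le_pow_left₀ (by positivity) (rSc_div_lSc_le hrl hθ i) j) (by norm_num)
      _ ≤ 3 * (1 / 4 * (1 / 2) ^ i) ^ 2 := by
          gcongr 3 * ?_
          exact pow_le_pow_of_le_one (by positivity) (by linarith) hj
      _ ≤ 3 / 16 * (1 / 2) ^ i := by nlinarith [pow_nonneg (by norm_num : (0 : ℝ) ≤ 1 / 2) i]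
  have hgeom : Summable fun i : ℕ => 3 / 16 * (1 / 2 : ℝ) ^ i := summable_geometric_two.mul_left _
  have hsum : Summable a := Summable.of_nonneg_of_le ha0 hle hgeom
  have htsum : ∑' i, a i ≤ 3 / 8 := by
    calc ∑' i, a i ≤ ∑' i : ℕ, 3 / 16 * (1 / 2 : ℝ) ^ i := hsum.tsum_le_tsum hle hgeom
      _ = 3 / 8 := by rw [tsum_mul_left, tsum_geometric_two]; norm_num
  have h1 : ∀ i, a i ≤ 1 := fun i => (hle i).trans <| by
    have : (1 / 2 : ℝ) ^ i ≤ 1 := pow_le_one₀ (by norm_num) (by norm_num)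
    linarith
  calc (5 / 8 : ℝ) ≤ 1 - ∑' i, a i := by linarith
    _ ≤ fjProd r0 l0 θ j := one_sub_tsum_le_tprod_one_sub ha0 h1 hsum

def boxCorner (L : ℕ) (x : Pt d) : Pt d := fun j => L * (x j / L)

lemma boxCorner_mem_lattice (L : ℕ) (x : Pt d) : boxCorner L x ∈ lattice d L :=
  fun _ => Dvd.intro _ rfl

lemma mem_box_boxCorner {L : ℕ} (hL : 0 < L) (x : Pt d) : x ∈ box (boxCorner L x) L := by
  intro i
  have hLZ : (0 : ℤ) < L := by exact_mod_cast hL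
  have := Int.mul_ediv_add_emod (x i) L
  have := Int.emod_nonneg (x i) hLZ.ne'
  have := Int.emod_lt_of_pos (x i) hLZ
  simp only [boxCorner]
  constructor <;> linarith

lemma boxCorner_eq_of_mem_box {L : ℕ} (hL : 0 < L) {xs z : Pt d} (hxs : xs ∈ lattice d L)
    (hz : z ∈ box xs L) : boxCorner L z = xs := by
  funext i
  obtain ⟨k, hk⟩ := hxs i
  have hLZ : (0 : ℤ) < L := by exact_mod_cast hL
  have hzi := hz i
  rw [hk] at hzi
  have : z i / L = k :=
    ((Int.ediv_emod_unique (r := z i - L * k) hLZ).mpr ⟨by ring, by linarith, by linarith⟩).1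
  simp only [boxCorner, this, hk]

lemma eq_or_eq_sub_of_dvd {L z v : ℤ} (hL : 0 < L) (hz : L ∣ z) (h1 : z ≤ v)
    (h2 : v < z + 2 * L) : z = L * (v / L) ∨ z = L * (v / L) - L := by
  obtain ⟨k, rfl⟩ := hz
  have hlo : L * (v / L) ≤ v := Int.mul_ediv_self_le hL.ne'
  have hhi : v < L * (v / L) + L := by
    have := Int.emod_lt_of_pos v hL
    linarith [Int.mul_ediv_add_emod v L]
  have hk1 : k - v / L < 1 := by by_contra h; nlinarith
  have hk2 : v / L - k < 2 := by by_contra h; nlinarith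
  rcases (by omega : k = v / L ∨ k = v / L - 1) with rfl | rfl
  · exact Or.inl rfl
  · exact Or.inr (by ring)

lemma corners_subset_range {L : ℕ} (hL : 0 < L) (v : Pt d) :
    {z ∈ lattice d L | v ∈ box z (2 * L)} ⊆
      Set.range fun e : Fin d → Bool => fun j => boxCorner L v j - if e j then (L : ℤ) else 0 := by
  rintro z ⟨hz, hv⟩
  refine ⟨fun j => decide (z j ≠ boxCorner L v j), funext fun j => ?_⟩
  rcases eq_or_eq_sub_of_dvd (by exact_mod_cast hL) (hz j) (hv j).1
    (by have := (hv j).2; push_cast at this; linarith) with h | h <;>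
    simp [boxCorner, h, hL.ne']

lemma ncard_corners_le {L : ℕ} (hL : 0 < L) (v : Pt d) :
    {z ∈ lattice d L | v ∈ box z (2 * L)}.ncard ≤ 2 ^ d := by
  calc _ ≤ (Set.range fun e : Fin d → Bool => fun j =>
          boxCorner L v j - if e j then (L : ℤ) else 0).ncard :=
        Set.ncard_le_ncard (corners_subset_range hL v) (Set.finite_range _)
    _ ≤ Nat.card (Fin d → Bool) := by
        rw [← Set.image_univ]
        exact (Set.ncard_image_le Set.finite_univ).trans (Set.ncard_univ _).le
    _ = 2 ^ d := by simp

lemma exists_eq_add_single_of_dist1_eq {L : ℕ} (hL : 0 < L) {x y : Pt d} (hx : x ∈ lattice d L)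
    (hy : y ∈ lattice d L) (hxy : dist1 x y = L) :
    ∃ i, y = x + Pi.single i (L : ℤ) ∨ x = y + Pi.single i (L : ℤ) := by
  obtain ⟨i, hi⟩ : ∃ i, (x i - y i).natAbs ≠ 0 := by
    by_contra! h
    rw [dist1, Finset.sum_eq_zero fun i _ => h i] at hxy
    omega
  have hdvd : (L : ℤ) ∣ x i - y i := dvd_sub (hx i) (hy i)
  have hLi : (x i - y i).natAbs = L := le_antisymm (hxy ▸ natAbs_sub_le_dist1 x y i)
    (Nat.le_of_dvd (Nat.pos_of_ne_zero hi) (by simpa using Int.natAbs_dvd_natAbs.mpr hdvd))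
  have hrest : ∀ j ≠ i, x j = y j := by
    intro j hj
    have hsum := Finset.add_sum_erase Finset.univ (fun k => (x k - y k).natAbs)
      (Finset.mem_univ i)
    have := Finset.single_le_sum (f := fun k => (x k - y k).natAbs) (fun _ _ => Nat.zero_le _)
      (Finset.mem_erase.mpr ⟨hj, Finset.mem_univ j⟩)
    rw [dist1] at hxy
    omega
  refine ⟨i, ?_⟩
  rcases Int.natAbs_eq_iff.mp hLi with h | h
  · right
    funext j
    by_cases hj : j = i
    · subst hj; simp; omega
    · simp [hj, hrest j hj]
  · left
    funext j
    by_cases hj : j = i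
    · subst hj; simp; omega
    · simp [hj, hrest j hj]

lemma subCorner_const_false (z : Pt d) (L : ℕ) : subCorner z L (fun _ => false) = z := by
  funext j; simp [subCorner]

lemma subCorner_eq_add_single (z : Pt d) (L : ℕ) (i : Fin d) :
    subCorner z L (fun j => decide (j = i)) = z + Pi.single i (L : ℤ) := by
  funext j
  by_cases hj : j = i
  · subst hj; simp [subCorner]
  · simp [subCorner, hj]

/-- The set `M_A` of the paper. -/
def meetingSet (ω : Config d) (η : ℝ) (L0 : ℕ) (G A : Set (Pt d)) : Set (Pt d) :=
  {x ∈ G | ∃ Cx : Set (Pt d), bigCompIn ω η L0 (box x L0) Cx ∧ (Cx ∩ A).Nonempty}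

/-- The set `D_A` of the paper, for `r = 2 L_s`. -/
def nearBoundary (C A : Set (Pt d)) (r : ℕ) : Set (Pt d) :=
  {x ∈ A | ∃ y ∈ C \ A, distInf x y ≤ r}

section BigComponents

variable {ω : Config d} {η : ℝ} {L0 : ℕ} {B C : Set (Pt d)}

lemma bigCompIn.nonempty (h : bigCompIn ω η L0 B C) : C.Nonempty := by
  obtain ⟨⟨w, hw, rfl⟩, -⟩ := h
  exact ⟨w, hw, hw, .refl⟩

lemma bigCompIn.subset (h : bigCompIn ω η L0 B C) : C ⊆ Sr ω L0 ∩ B := by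
  obtain ⟨⟨w, -, rfl⟩, -⟩ := h
  exact fun _ hy => hy.2.1

lemma exists_bigCompIn_of_mem_eventA {z : Pt d} (h : ω ∈ eventA d η L0 z) :
    ∃ Cz, bigCompIn ω η L0 (box z L0) Cz := by
  simpa only [subCorner_const_false] using h.1 fun _ => false

lemma exists_mem_box_of_mem_eventA {z : Pt d} (h : ω ∈ eventA d η L0 z)
    (hC : ∀ Cz, bigCompIn ω η L0 (box z L0) Cz → Cz ⊆ C) : ∃ q ∈ C, q ∈ box z L0 := by
  obtain ⟨Cz, hCz⟩ := exists_bigCompIn_of_mem_eventA h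
  obtain ⟨q, hq⟩ := hCz.nonempty
  exact ⟨q, hC Cz hCz hq, (hCz.subset hq).2⟩

end BigComponents

section Boundary

variable {ω : Config d} {η : ℝ} {L0 Ls R : ℕ} {T G C A : Set (Pt d)}

lemma exists_edgeBd_of_mem_bdWithin (hL0 : 0 < L0) (hGlat : G ⊆ lattice d L0)
    (hGA : ∀ z ∈ G, ω ∈ eventA d η L0 z) {p : Pt d × Pt d}
    (hp : p ∈ bdWithin L0 G (meetingSet ω η L0 G A)) :
    ∃ z i, (p = (z, z + Pi.single i (L0 : ℤ)) ∨ p = (z + Pi.single i (L0 : ℤ), z)) ∧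
      ∃ e ∈ edgeBd (SS ω) A, e.1 ∈ box z (2 * L0) := by
  obtain ⟨x, y⟩ := p
  obtain ⟨hxy, ⟨hxG, Cx, hCx, q, hqCx, hqA⟩, hyG, hyM⟩ := hp
  dsimp only at hxy hxG hCx hyG hyM
  obtain ⟨Cy, hCy⟩ := exists_bigCompIn_of_mem_eventA (hGA y hyG)
  obtain ⟨w, hwCy⟩ := hCy.nonempty
  have hwA : w ∉ A := fun hwA => hyM ⟨hyG, Cy, hCy, w, hwCy, hwA⟩
  have hcross : ∀ z e e', z ∈ G → x = subCorner z L0 e → y = subCorner z L0 e' →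
      ∃ e ∈ edgeBd (SS ω) A, e.1 ∈ box z (2 * L0) := by
    rintro z e e' hz rfl rfl
    exact (exists_mem_edgeBd_of_connIn Set.inter_subset_left
      ((hGA z hz).2 e e' Cx Cy q w hCx hCy hqCx hwCy) hqA hwA).imp fun _ h => ⟨h.1, h.2.2⟩
  obtain ⟨i, rfl | rfl⟩ := exists_eq_add_single_of_dist1_eq hL0 (hGlat hxG) (hGlat hyG) hxy
  · exact ⟨x, i, .inl rfl, hcross x _ _ hxG (subCorner_const_false x L0).symm
      (subCorner_eq_add_single x L0 i).symm⟩
  · exact ⟨y, i, .inr rfl, hcross y _ _ hyG (subCorner_eq_add_single y L0 i).symm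
      (subCorner_const_false y L0).symm⟩

lemma ncard_bdWithin_meetingSet_le (hd : 0 < d) (hL0 : 0 < L0) (hGlat : G ⊆ lattice d L0)
    (hGfin : G.Finite) (hGA : ∀ z ∈ G, ω ∈ eventA d η L0 z) (hA : A.Finite) :
    (bdWithin L0 G (meetingSet ω η L0 G A)).ncard ≤ d * 2 ^ d * (edgeBd (SS ω) A).ncard := by
  have : Nonempty (Fin d) := ⟨⟨0, hd⟩⟩
  set M := meetingSet ω η L0 G A
  choose! z i hpair F hFE hFbox using
    fun p (hp : p ∈ bdWithin L0 G M) => exists_edgeBd_of_mem_bdWithin hL0 hGlat hGA hp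
  have hfin : (bdWithin L0 G M).Finite :=
    (hGfin.prod hGfin).subset fun p hp => ⟨hp.2.1.1, hp.2.2.1⟩
  refine ncard_le_mul_ncard_of_mapsTo hfin (edgeBd_finite _ hA) (fun p hp => hFE p hp)
    fun e _ => ?_
  set corners := {c ∈ lattice d L0 | e.1 ∈ box c (2 * L0)}
  have hcorners : corners.Finite := (Set.finite_range _).subset (corners_subset_range hL0 e.1)
  -- a boundary pair is determined by its lower corner and direction, the orientation by `M`
  calc {p ∈ bdWithin L0 G M | F p = e}.ncard ≤ (corners ×ˢ (Set.univ : Set (Fin d))).ncard := by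
        refine Set.ncard_le_ncard_of_injOn (fun p => (z p, i p)) ?_ ?_
          (hcorners.prod Set.finite_univ)
        · rintro p ⟨hp, rfl⟩
          refine ⟨⟨?_, hFbox p hp⟩, Set.mem_univ _⟩
          rcases hpair p hp with h | h <;> rw [h] at hp
          exacts [hGlat hp.2.1.1, hGlat hp.2.2.1]
        · rintro p ⟨hp, -⟩ q ⟨hq, -⟩ hpq
          simp only [Prod.mk.injEq] at hpq
          obtain ⟨hz, hi⟩ := hpq
          rcases hpair p hp with hp' | hp' <;> rcases hpair q hq with hq' | hq' <;>
            rw [hp'] at hp ⊢ <;> rw [hq'] at hq ⊢ <;> rw [hz, hi] at hp ⊢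
          exacts [absurd hp.2.1 hq.2.2.2, absurd hq.2.1 hp.2.2.2]
    _ = corners.ncard * d := by
        rw [Set.ncard_prod, Set.ncard_univ, Nat.card_eq_fintype_card, Fintype.card_fin]
    _ ≤ d * 2 ^ d := by
        rw [mul_comm]
        exact Nat.mul_le_mul_left d (ncard_corners_le hL0 e.1)

lemma exists_edgeBd_near (hLs : 0 < Ls) (hR : 1 ≤ R)
    (hconn : ∀ z ∈ ballZ (0 : Pt d) (2 * R),
      ∀ x ∈ Sr ω Ls ∩ boxI z (-(2 * Ls : ℤ)) (2 * Ls),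
      ∀ y ∈ Sr ω Ls ∩ boxI z (-(2 * Ls : ℤ)) (2 * Ls),
        connIn (SS ω ∩ boxI z (-(4 * Ls : ℤ)) (4 * Ls)) x y)
    {x y : Pt d} (hxR : x ∈ ballZ 0 R) (hx : x ∈ A ∩ Sr ω Ls) (hy : y ∈ Sr ω Ls \ A)
    (hxy : distInf x y ≤ 2 * Ls) : ∃ e ∈ edgeBd (SS ω) A, distInf e.1 x ≤ 4 * Ls := by
  -- a centre `c` near `x` such that `x` and `y` both lie in `c + [-2L_s, 2L_s)^d`
  set c : Pt d := fun i => x i + if y i = x i + 2 * Ls then 1 else 0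
  have hxyi : ∀ i, (x i - y i).natAbs ≤ 2 * Ls := distInf_le_iff.mp hxy
  have hxRi : ∀ i, ((0 : Pt d) i - x i).natAbs ≤ R := distInf_le_iff.mp hxR
  have hc : c ∈ ballZ 0 (2 * R) := distInf_le_iff.mpr fun i => by
    have := hxRi i
    by_cases h : y i = x i + 2 * Ls <;> simp [c, h] at this ⊢ <;> omega
  have hxc : x ∈ boxI c (-(2 * Ls : ℤ)) (2 * Ls) := fun i => by
    by_cases h : y i = x i + 2 * Ls <;> simp [c, h] <;> omega
  have hyc : y ∈ boxI c (-(2 * Ls : ℤ)) (2 * Ls) := fun i => by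
    have := hxyi i
    by_cases h : y i = x i + 2 * Ls <;> simp [c, h] <;> omega
  obtain ⟨e, he, he1⟩ := exists_mem_edgeBd_of_connIn Set.inter_subset_left
    (hconn c hc x ⟨hx.2, hxc⟩ y ⟨hy.1, hyc⟩) hx.1 hy.2
  refine ⟨e, he, distInf_le_iff.mpr fun i => ?_⟩
  have := he1.2 i
  by_cases h : y i = x i + 2 * Ls <;> simp [c, h] at this <;> omega

lemma ncard_nearBoundary_le (hLs : 0 < Ls) (hR : 1 ≤ R)
    (hconn : ∀ z ∈ ballZ (0 : Pt d) (2 * R),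
      ∀ x ∈ Sr ω Ls ∩ boxI z (-(2 * Ls : ℤ)) (2 * Ls),
      ∀ y ∈ Sr ω Ls ∩ boxI z (-(2 * Ls : ℤ)) (2 * Ls),
        connIn (SS ω ∩ boxI z (-(4 * Ls : ℤ)) (4 * Ls)) x y)
    (hC : isLargestComp T C) (hT : T ⊆ SS ω) (hAR : A ⊆ ballZ 0 R) (hAC : A ⊆ C)
    (hfar : 2 ≤ Ls → ∃ u ∈ C, ∃ w ∈ C, (Ls : ℝ) ≤ dist1 u w) :
    (nearBoundary C A (2 * Ls)).ncard ≤ (11 * Ls) ^ d * (edgeBd (SS ω) A).ncard := by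
  have hAfin : A.Finite := (ballZ_finite 0 R).subset hAR
  refine (ncard_le_of_forall_exists_near (r := 4 * Ls) (hAfin.subset fun x hx => hx.1)
    (edgeBd_finite _ hAfin) fun x hx => ?_).trans
      (Nat.mul_le_mul_right _ (Nat.pow_le_pow_left (by omega) d))
  obtain ⟨hxA, y, ⟨hyC, hyA⟩, hxy⟩ := hx
  obtain ⟨u, hu, w, hw, huw⟩ : ∃ u ∈ C, ∃ w ∈ C, (Ls : ℝ) ≤ dist1 u w := by
    rcases lt_or_ge Ls 2 with hLs2 | hLs2
    · refine ⟨x, hAC hxA, y, hyC, ?_⟩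
      have := one_le_dist1 fun h : x = y => hyA (h ▸ hxA)
      exact_mod_cast (show Ls ≤ dist1 x y by omega)
    · exact hfar hLs2
  have hSr : C ⊆ Sr ω Ls := fun v hv => mem_Sr_of_mem_isLargestComp hC hT hu hw huw hv
  exact exists_edgeBd_near hLs hR hconn (hAR hxA) ⟨hxA, hSr (hAC hxA)⟩ ⟨hSr hyC, hyA⟩ hxy

lemma exists_dist1_ge (hd : 0 < d) (hL0Ls : L0 ≤ Ls) (h5 : 5 * Ls ≤ 2 * R)
    (hGA : ∀ z ∈ G, ω ∈ eventA d η L0 z)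
    (hGC : ∀ z ∈ G, ∀ Cz, bigCompIn ω η L0 (box z L0) Cz → Cz ⊆ C)
    (hG : ∀ xs ∈ lattice d Ls ∩ ballZ (0 : Pt d) (2 * R - 2 * Ls), (G ∩ box xs Ls).Nonempty) :
    ∃ u ∈ C, ∃ w ∈ C, (Ls : ℝ) ≤ dist1 u w := by
  set i₀ : Fin d := ⟨0, hd⟩
  -- points of `C` in the boxes of side `L_s` at `0` and at `3 L_s e_{i₀}`
  have hfar : Pi.single i₀ (3 * Ls : ℤ) ∈ lattice d Ls ∩ ballZ (0 : Pt d) (2 * R - 2 * Ls) := by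
    refine ⟨fun j => ?_, distInf_le_iff.mpr fun j => ?_⟩ <;> by_cases hj : j = i₀
    · subst hj; simp
    · simp [hj]
    · subst hj; simp; omega
    · simp [hj]
  have hzero : (0 : Pt d) ∈ lattice d Ls ∩ ballZ (0 : Pt d) (2 * R - 2 * Ls) :=
    ⟨fun _ => dvd_zero _, distInf_le_iff.mpr fun _ => by simp⟩
  obtain ⟨z₁, hz₁G, hz₁⟩ := hG 0 hzero
  obtain ⟨z₂, hz₂G, hz₂⟩ := hG _ hfar
  obtain ⟨u, hu, hu₁⟩ := exists_mem_box_of_mem_eventA (hGA z₁ hz₁G) (hGC z₁ hz₁G)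
  obtain ⟨w, hw, hw₂⟩ := exists_mem_box_of_mem_eventA (hGA z₂ hz₂G) (hGC z₂ hz₂G)
  refine ⟨u, hu, w, hw, ?_⟩
  have h1 := hz₁ i₀
  have h2 := hz₂ i₀
  have h3 := hu₁ i₀
  have h4 := hw₂ i₀
  simp only [Pi.zero_apply, Pi.single_eq_same] at h1 h2
  have := natAbs_sub_le_dist1 u w i₀
  exact_mod_cast (show Ls ≤ dist1 u w by omega)

end Boundary

section Volume

variable {ω : Config d} {η : ℝ} {L0 Ls R : ℕ} {G C A : Set (Pt d)}

lemma mem_meetingSet_of_box_subset {r : ℕ} (hGA : ∀ z ∈ G, ω ∈ eventA d η L0 z)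
    (hGC : ∀ z ∈ G, ∀ Cz, bigCompIn ω η L0 (box z L0) Cz → Cz ⊆ C) {z x : Pt d} (hz : z ∈ G)
    (hx : x ∈ A \ nearBoundary C A r) (hbox : box z L0 ⊆ ballZ x r) :
    z ∈ meetingSet ω η L0 G A := by
  obtain ⟨Cz, hCz⟩ := exists_bigCompIn_of_mem_eventA (hGA z hz)
  obtain ⟨q, hq⟩ := hCz.nonempty
  refine ⟨hz, Cz, hCz, q, hq, ?_⟩
  by_contra hqA
  exact hx.2 ⟨hx.1, q, ⟨hGC z hz Cz hCz hq, hqA⟩, hbox (hCz.subset hq).2⟩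

lemma ncard_le_div_mul_of_boxes (hLs : 0 < Ls) {S M : Set (Pt d)} (hS : S.Finite)
    (hM : M.Finite) {c : ℝ} (hc : 0 < c) (hsub : ∀ x ∈ S, G ∩ box (boxCorner Ls x) Ls ⊆ M)
    (hlb : ∀ x ∈ S, c ≤ (G ∩ box (boxCorner Ls x) Ls).ncard) :
    (S.ncard : ℝ) ≤ Ls ^ d / c * M.ncard := by
  set X := boxCorner Ls '' S
  have hX : X.Finite := hS.image _
  have hSX : S.ncard ≤ Ls ^ d * X.ncard :=
    ncard_le_mul_ncard_of_mapsTo hS hX (Set.mapsTo_image _ _) fun xs _ =>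
      (Set.ncard_le_ncard (fun x hx => hx.2 ▸ mem_box_boxCorner hLs x) (box_finite _ _)).trans
        (ncard_box_le _ _)
  have hdisj : X.PairwiseDisjoint fun xs => G ∩ box xs Ls := by
    rintro _ ⟨x, -, rfl⟩ _ ⟨x', -, rfl⟩ hne
    exact Set.disjoint_left.mpr fun z hz hz' => hne <|
      (boxCorner_eq_of_mem_box hLs (boxCorner_mem_lattice _ _) hz.2).symm.trans
        (boxCorner_eq_of_mem_box hLs (boxCorner_mem_lattice _ _) hz'.2)
  have hXM : X.ncard * c ≤ M.ncard :=
    ncard_mul_le_of_pairwiseDisjoint hX (fun _ _ => (box_finite _ _).subset Set.inter_subset_right)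
      hdisj hM (by rintro _ ⟨x, hx, rfl⟩; exact hsub x hx)
      (by rintro _ ⟨x, hx, rfl⟩; exact hlb x hx)
  calc (S.ncard : ℝ) ≤ Ls ^ d * X.ncard := by exact_mod_cast hSX
    _ ≤ Ls ^ d / c * M.ncard := by
        rw [div_mul_eq_mul_div, le_div_iff₀ hc, mul_assoc]
        gcongr

lemma ncard_sdiff_nearBoundary_le (hL0 : 0 < L0) (hL0Ls : L0 ≤ Ls) (h3 : 3 * Ls ≤ R + 1)
    {c : ℝ} (hc : 0 < c) (hGA : ∀ z ∈ G, ω ∈ eventA d η L0 z)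
    (hGC : ∀ z ∈ G, ∀ Cz, bigCompIn ω η L0 (box z L0) Cz → Cz ⊆ C) (hGfin : G.Finite)
    (hG : ∀ xs ∈ lattice d Ls ∩ ballZ (0 : Pt d) (2 * R - 2 * Ls), c ≤ (G ∩ box xs Ls).ncard)
    (hAR : A ⊆ ballZ 0 R) :
    ((A \ nearBoundary C A (2 * Ls)).ncard : ℝ) ≤
      Ls ^ d / c * (meetingSet ω η L0 G A).ncard := by
  have hLs : 0 < Ls := hL0.trans_le hL0Ls
  refine ncard_le_div_mul_of_boxes hLs (((ballZ_finite 0 R).subset hAR).sdiff)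
    (hGfin.subset fun _ h => h.1) hc
    (fun x hx z hz => mem_meetingSet_of_box_subset hGA hGC hz.1 hx fun q hq => ?_)
    fun x hx => hG _ ⟨boxCorner_mem_lattice _ _, ?_⟩
  · refine distInf_le_iff.mpr fun i => ?_
    have := hz.2 i
    have := hq i
    have := mem_box_boxCorner hLs x i
    omega
  · refine distInf_le_iff.mpr fun i => ?_
    have := distInf_le_iff.mp (hAR hx.1) i
    have := mem_box_boxCorner hLs x i
    simp only [Pi.zero_apply] at *
    omega

lemma ncard_sdiff_nearBoundary_le_of_near {r : ℕ} (hGA : ∀ z ∈ G, ω ∈ eventA d η L0 z)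
    (hGC : ∀ z ∈ G, ∀ Cz, bigCompIn ω η L0 (box z L0) Cz → Cz ⊆ C) (hGfin : G.Finite)
    (hAR : A ⊆ ballZ 0 R) {z : Pt d} (hz : z ∈ G) (hbox : ∀ x ∈ A, box z L0 ⊆ ballZ x r) :
    (A \ nearBoundary C A r).ncard ≤ (2 * R + 1) ^ d * (meetingSet ω η L0 G A).ncard := by
  rcases (A \ nearBoundary C A r).eq_empty_or_nonempty with h | ⟨x, hx⟩
  · simp [h]
  have hM : 0 < (meetingSet ω η L0 G A).ncard := (Set.ncard_pos (hGfin.subset fun _ h => h.1)).mpr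
    ⟨z, mem_meetingSet_of_box_subset hGA hGC hz hx (hbox x hx.1)⟩
  calc (A \ nearBoundary C A r).ncard ≤ (ballZ (0 : Pt d) R).ncard :=
        Set.ncard_le_ncard (Set.sdiff_subset.trans hAR) (ballZ_finite _ _)
    _ ≤ (2 * R + 1) ^ d := ncard_ballZ_le _ _
    _ ≤ (2 * R + 1) ^ d * (meetingSet ω η L0 G A).ncard := Nat.le_mul_of_pos_right _ hM

lemma ncard_le_meetingSet_add_nearBoundary (hd : 0 < d) (hL0 : 0 < L0) (hL0Ls : L0 ≤ Ls)
    (hLsR : Ls ^ 4 ≤ R) {F : ℝ} (hF : 5 / 8 ≤ F) (hGA : ∀ z ∈ G, ω ∈ eventA d η L0 z)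
    (hGC : ∀ z ∈ G, ∀ Cz, bigCompIn ω η L0 (box z L0) Cz → Cz ⊆ C) (hGfin : G.Finite)
    (hG : ∀ xs ∈ lattice d Ls ∩ ballZ (0 : Pt d) (2 * R - 2 * Ls),
      ((Ls : ℝ) / L0) ^ d * F ≤ (G ∩ box xs Ls).ncard)
    (hAR : A ⊆ ballZ 0 R) :
    (A.ncard : ℝ) ≤ 6 ^ d * L0 ^ d * (meetingSet ω η L0 G A).ncard +
      (nearBoundary C A (2 * Ls)).ncard := by
  set M := meetingSet ω η L0 G A
  set D := nearBoundary C A (2 * Ls)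
  have hLs : 0 < Ls := hL0.trans_le hL0Ls
  have hc : 0 < ((Ls : ℝ) / L0) ^ d * F :=
    mul_pos (pow_pos (div_pos (by exact_mod_cast hLs) (by exact_mod_cast hL0)) d) (by linarith)
  have hsplit : (A.ncard : ℝ) ≤ (A \ D).ncard + D.ncard := by
    exact_mod_cast Set.ncard_le_ncard_sdiff_add_ncard A D
      (((ballZ_finite 0 R).subset hAR).subset fun _ h => h.1)
  suffices ((A \ D).ncard : ℝ) ≤ 6 ^ d * L0 ^ d * M.ncard by linarith
  rcases le_or_gt 2 R with hR | hR
  · have h3 : 3 * Ls ≤ R + 1 := by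
      rcases lt_or_ge Ls 2 with h | h
      · omega
      · linarith [eight_mul_le_pow_four h]
    have h6 : (1 : ℝ) ≤ 6 ^ d * F := by
      nlinarith [le_self_pow₀ (by norm_num : (1 : ℝ) ≤ 6) hd.ne']
    calc ((A \ D).ncard : ℝ) ≤ Ls ^ d / (((Ls : ℝ) / L0) ^ d * F) * M.ncard :=
          ncard_sdiff_nearBoundary_le hL0 hL0Ls h3 hc hGA hGC hGfin hG hAR
      _ = L0 ^ d / F * M.ncard := by rw [div_pow]; field_simp
      _ ≤ 6 ^ d * L0 ^ d * M.ncard := by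
          gcongr ?_ * _
          rw [div_le_iff₀ (by linarith)]
          nlinarith [pow_pos (by exact_mod_cast hL0 : (0 : ℝ) < L0) d]
  · -- the degenerate scale `R = L_s = L_0 = 1`, where a single box of `G` serves all of `A`
    have hR1 : R = 1 := by have := Nat.one_le_pow 4 Ls hLs; omega
    have hLs1 : Ls = 1 := by
      by_contra h
      have := Nat.pow_le_pow_left (show 2 ≤ Ls by omega) 4
      omega
    obtain rfl : L0 = 1 := by omega
    obtain ⟨z, hzG, hz⟩ := nonempty_of_le_ncard hc
      (hG 0 ⟨fun _ => dvd_zero _, distInf_le_iff.mpr fun _ => by simp [hR1, hLs1]⟩)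
    have h := ncard_sdiff_nearBoundary_le_of_near (r := 2 * Ls) hGA hGC hGfin hAR hzG
      fun x hx q hq => distInf_le_iff.mpr fun i => by
        have := hz i
        have := hq i
        have := distInf_le_iff.mp (hAR hx) i
        simp only [Pi.zero_apply, hLs1, hR1] at *
        omega
    rw [hR1] at h
    calc ((A \ D).ncard : ℝ) ≤ ((2 * 1 + 1) ^ d * M.ncard : ℕ) := by exact_mod_cast h
      _ ≤ 6 ^ d * (1 : ℕ) ^ d * M.ncard := by
          push_cast
          rw [one_pow, mul_one]
          gcongr
          norm_num

end Volume

theorem stmt9_general (d : ℕ) (hd : 2 ≤ d) (a b : ℝ)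
    (P : ℝ → Measure (Config d)) (Ax : Axioms d a b P)
    (u : ℝ)
    (θiso : ℝ) (hθiso : θiso ∈ Set.Ioo (0:ℝ) 1) :
    ∃ ρ > (0:ℝ),
      ∀ (l0 r0 L0 : ℕ), 0 < r0 → 4*r0 < l0 → 0 < L0 →
      (1 - 1/(L0:ℝ)) ^ (-(d:ℝ)) * (fjProd r0 l0 ⌈1/Ax.εP⌉₊ d)⁻¹ - 1 < eta d (P u) / 4 →
      ∀ R : ℕ, (L0 : ℝ) ^ ((3*(d:ℝ)^2)/θiso) ≤ (R : ℝ) →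
      ∀ s r : ℕ, isScaleS d l0 L0 ⌈1/Ax.εP⌉₊ θiso R s → r = s/2 →
      ∀ ω : Config d, ω ∈ eventH d (eta d (P u)) r0 l0 L0 ⌈1/Ax.εP⌉₊ s r R →
      ∀ G : Set (Pt d),
        G ⊆ lattice d L0 ∩ ballZ (0 : Pt d) (2*R - LSc l0 L0 ⌈1/Ax.εP⌉₊ s) →
        (∀ z ∈ G, ω ∈ eventA d (eta d (P u)) L0 z ∧ ω ∈ eventB d (eta d (P u)) L0 z) →
        (∀ xs ∈ lattice d (LSc l0 L0 ⌈1/Ax.εP⌉₊ s) ∩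
            ballZ (0 : Pt d) (2*R - 2*LSc l0 L0 ⌈1/Ax.εP⌉₊ s),
          IsConnL L0 (G ∩ box xs (LSc l0 L0 ⌈1/Ax.εP⌉₊ s)) ∧
          ((LSc l0 L0 ⌈1/Ax.εP⌉₊ s : ℝ)/(L0 : ℝ)) ^ d * fjProd r0 l0 ⌈1/Ax.εP⌉₊ d ≤
            (G ∩ box xs (LSc l0 L0 ⌈1/Ax.εP⌉₊ s)).ncard) →
      ∀ CR C2R : Set (Pt d),
        isLargestComp (SS ω ∩ ballZ (0 : Pt d) R) CR →
        isLargestComp (SS ω ∩ ballZ (0 : Pt d) (2*R)) C2R →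
        CR ⊆ C2R →
        (∀ x ∈ G, ∀ Cx : Set (Pt d),
          bigCompIn ω (eta d (P u)) L0 (box x L0) Cx → Cx ⊆ C2R) →
      ∀ A : Set (Pt d), A ⊆ CR →
        -- the boundary bound (3.9)
        (((1:ℝ)/(d * 2^d)) *
            (bdWithin L0 G {x ∈ G | ∃ Cx : Set (Pt d),
              bigCompIn ω (eta d (P u)) L0 (box x L0) Cx ∧ (Cx ∩ A).Nonempty}).ncard ≤
          (edgeBd (SS ω) A).ncard ∧
         ({x ∈ A | ∃ y ∈ C2R \ A,
              distInf x y ≤ 2 * LSc l0 L0 ⌈1/Ax.εP⌉₊ s}.ncard : ℝ) /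
            (11 * (LSc l0 L0 ⌈1/Ax.εP⌉₊ s : ℝ)) ^ d ≤
          (edgeBd (SS ω) A).ncard) ∧
        -- the volume bound (3.10), provided r₀/l₀ < ρ
        ((r0 : ℝ)/(l0 : ℝ) < ρ →
          (A.ncard : ℝ) ≤
            6 ^ d * (L0 : ℝ) ^ d *
              ({x ∈ G | ∃ Cx : Set (Pt d),
                bigCompIn ω (eta d (P u)) L0 (box x L0) Cx ∧ (Cx ∩ A).Nonempty}.ncard : ℝ) +
            ({x ∈ A | ∃ y ∈ C2R \ A,
                distInf x y ≤ 2 * LSc l0 L0 ⌈1/Ax.εP⌉₊ s}.ncard : ℝ)) := by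
  refine ⟨1, one_pos, ?_⟩
  intro l0 r0 L0 _ hrl hL0 _ R hRL s _ hs _ ω hω G hG hGAB hGdens CR C2R hCR hC2R hCRC2R hGC A hA
  set Ls := LSc l0 L0 ⌈1/Ax.εP⌉₊ s
  have hθ : 1 ≤ ⌈1/Ax.εP⌉₊ := Nat.one_le_ceil_iff.mpr (one_div_pos.mpr Ax.εP_pos)
  have hF := five_eighths_le_fjProd hrl hθ hd
  have hL0Ls : L0 ≤ Ls := le_LSc (by omega) _ _ _
  have hLs : (0 : ℝ) < Ls := by exact_mod_cast hL0.trans_le hL0Ls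
  have hLsR : Ls ^ 4 ≤ R := pow_four_le_of_isScaleS hd hL0 (by omega) hθiso hRL hs
  have hR : 1 ≤ R := (Nat.one_le_pow _ _ (by omega)).trans hLsR
  have hGA : ∀ z ∈ G, ω ∈ eventA d (eta d (P u)) L0 z := fun z hz => (hGAB z hz).1
  have hGfin : G.Finite := (ballZ_finite 0 _).subset fun x hx => (hG hx).2
  have hAR : A ⊆ ballZ 0 R := fun x hx => (hCR.subset (hA hx)).2
  have hc : 0 < ((Ls : ℝ) / L0) ^ d * fjProd r0 l0 ⌈1/Ax.εP⌉₊ d :=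
    mul_pos (pow_pos (div_pos hLs (by exact_mod_cast hL0)) d) (by linarith)
  refine ⟨⟨?_, ?_⟩, fun _ => ncard_le_meetingSet_add_nearBoundary (by omega) hL0 hL0Ls hLsR hF
    hGA hGC hGfin (fun xs hxs => (hGdens xs hxs).2) hAR⟩
  · have h := ncard_bdWithin_meetingSet_le (by omega) hL0 (fun x hx => (hG hx).1) hGfin hGA
      ((ballZ_finite 0 R).subset hAR)
    have hd0 : (0 : ℝ) < d := by exact_mod_cast (by omega : 0 < d)
    rw [one_div_mul_eq_div, div_le_iff₀ (by positivity)]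
    exact_mod_cast h.trans_eq (mul_comm _ _)
  · have h := ncard_nearBoundary_le (by omega) hR hω.2 hC2R Set.inter_subset_left hAR
      (fun x hx => hCRC2R (hA hx)) fun h2 => exists_dist1_ge (by omega) hL0Ls
        (by linarith [eight_mul_le_pow_four h2]) hGA hGC
        fun xs hxs => nonempty_of_le_ncard hc (hGdens xs hxs).2
    rw [div_le_iff₀ (by positivity)]
    exact_mod_cast h.trans_eq (mul_comm _ _)

/-- Lemma 3.2. In the setting of the isoperimetry proof, for `A ⊆ C_R`, with
`M_A = {x ∈ 𝐆 : C_x ∩ A ≠ ∅}` and `D_A = {x ∈ A : ∃ y ∈ C_{2R}∖A, |x−y|_∞ ≤ 2L_s}`: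
`|∂_S A| ≥ max{(d·2^d)⁻¹·|∂_𝐆 M_A|, |D_A|/(11L_s)^d}`, and there is `ρ > 0` such that if
`r_0/l_0 < ρ` then `|A| ≤ 6^d·L_0^d·|M_A| + |D_A|`. -/
theorem stmt9 (d : ℕ) (hd : 2 ≤ d) (a b : ℝ) (ha : 0 ≤ a) (hab : a < b)
    (P : ℝ → Measure (Config d)) (Ax : Axioms d a b P)
    (u : ℝ) (hu : u ∈ Set.Ioo a b)
    (θiso : ℝ) (hθiso : θiso ∈ Set.Ioo (0:ℝ) 1) :
    ∃ ρ > (0:ℝ),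
      ∀ (l0 r0 L0 : ℕ), 0 < r0 → 4*r0 < l0 → 0 < L0 →
      (1 - 1/(L0:ℝ)) ^ (-(d:ℝ)) * (fjProd r0 l0 ⌈1/Ax.εP⌉₊ d)⁻¹ - 1 < eta d (P u) / 4 →
      ∀ R : ℕ, (L0 : ℝ) ^ ((3*(d:ℝ)^2)/θiso) ≤ (R : ℝ) →
      ∀ s r : ℕ, isScaleS d l0 L0 ⌈1/Ax.εP⌉₊ θiso R s → r = s/2 →
      ∀ ω : Config d, ω ∈ eventH d (eta d (P u)) r0 l0 L0 ⌈1/Ax.εP⌉₊ s r R →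
      ∀ G : Set (Pt d),
        G ⊆ lattice d L0 ∩ ballZ (0 : Pt d) (2*R - LSc l0 L0 ⌈1/Ax.εP⌉₊ s) →
        (∀ z ∈ G, ω ∈ eventA d (eta d (P u)) L0 z ∧ ω ∈ eventB d (eta d (P u)) L0 z) →
        (∀ xs ∈ lattice d (LSc l0 L0 ⌈1/Ax.εP⌉₊ s) ∩
            ballZ (0 : Pt d) (2*R - 2*LSc l0 L0 ⌈1/Ax.εP⌉₊ s),
          IsConnL L0 (G ∩ box xs (LSc l0 L0 ⌈1/Ax.εP⌉₊ s)) ∧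
          ((LSc l0 L0 ⌈1/Ax.εP⌉₊ s : ℝ)/(L0 : ℝ)) ^ d * fjProd r0 l0 ⌈1/Ax.εP⌉₊ d ≤
            (G ∩ box xs (LSc l0 L0 ⌈1/Ax.εP⌉₊ s)).ncard) →
      ∀ CR C2R : Set (Pt d),
        isLargestComp (SS ω ∩ ballZ (0 : Pt d) R) CR →
        isLargestComp (SS ω ∩ ballZ (0 : Pt d) (2*R)) C2R →
        CR ⊆ C2R →
        (∀ x ∈ G, ∀ Cx : Set (Pt d),
          bigCompIn ω (eta d (P u)) L0 (box x L0) Cx → Cx ⊆ C2R) →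
      ∀ A : Set (Pt d), A ⊆ CR →
        -- the boundary bound (3.9)
        (((1:ℝ)/(d * 2^d)) *
            (bdWithin L0 G {x ∈ G | ∃ Cx : Set (Pt d),
              bigCompIn ω (eta d (P u)) L0 (box x L0) Cx ∧ (Cx ∩ A).Nonempty}).ncard ≤
          (edgeBd (SS ω) A).ncard ∧
         ({x ∈ A | ∃ y ∈ C2R \ A,
              distInf x y ≤ 2 * LSc l0 L0 ⌈1/Ax.εP⌉₊ s}.ncard : ℝ) /
            (11 * (LSc l0 L0 ⌈1/Ax.εP⌉₊ s : ℝ)) ^ d ≤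
          (edgeBd (SS ω) A).ncard) ∧
        -- the volume bound (3.10), provided r₀/l₀ < ρ
        ((r0 : ℝ)/(l0 : ℝ) < ρ →
          (A.ncard : ℝ) ≤
            6 ^ d * (L0 : ℝ) ^ d *
              ({x ∈ G | ∃ Cx : Set (Pt d),
                bigCompIn ω (eta d (P u)) L0 (box x L0) Cx ∧ (Cx ∩ A).Nonempty}.ncard : ℝ) +
            ({x ∈ A | ∃ y ∈ C2R \ A,
                distInf x y ≤ 2 * LSc l0 L0 ⌈1/Ax.εP⌉₊ s}.ncard : ℝ)) :=
  stmt9_general d hd a b P Ax u θiso hθiso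

end Perco
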